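/- For any matrices U, V ∈ ℝ^{n×r}, ‖UUᵀ − VVᵀ‖_F² ≤ 2·(‖U‖₂² + ‖V‖₂²)·‖U − V‖_F². -/

import Mathlib

open Matrix

attribute [local instance] Matrix.frobeniusNormedAddCommGroup Matrix.frobeniusNormedSpace

noncomputable section

/-- Frobenius inner product of two real matrices: `⟨A,B⟩ = tr(Aᵀ B)`. -/
def finner {n m : ℕ} (A B : Matrix (Fin n) (Fin m) ℝ) : ℝ := Matrix.trace (Aᵀ * B)

/-- Frobenius norm. -/
def fnorm {n m : ℕ} (A : Matrix (Fin n) (Fin m) ℝ) : ℝ := Real.sqrt (finner A A)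

/-- Spectral norm: the operator norm of the induced map between Euclidean spaces. -/
def specNorm {n m : ℕ} (A : Matrix (Fin n) (Fin m) ℝ) : ℝ :=
  ‖LinearMap.toContinuousLinearMap (Matrix.toEuclideanLin A)‖

/-- `singVal A k` is the `k`-th largest singular value of `A` (`k = 1, …`), via the
Courant–Fischer min-max characterization. -/
def singVal {n m : ℕ} (A : Matrix (Fin n) (Fin m) ℝ) (k : ℕ) : ℝ :=
  ⨆ V : {V : Submodule ℝ (EuclideanSpace ℝ (Fin m)) // Module.finrank ℝ V = k},
    ⨅ x : {x : EuclideanSpace ℝ (Fin m) // x ∈ V.1 ∧ ‖x‖ = 1},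
      ‖Matrix.toEuclideanLin A x.1‖

/-- `DIST U V = min_R ‖U - V R‖_F` over `r × r` orthogonal matrices `R`. -/
def DIST {n r : ℕ} (U V : Matrix (Fin n) (Fin r) ℝ) : ℝ :=
  ⨅ R : Matrix.orthogonalGroup (Fin r) ℝ, fnorm (U - V * (R : Matrix (Fin r) (Fin r) ℝ))

/-- `g` is the gradient of `f` w.r.t. the Frobenius inner product. -/
def IsGradient {n : ℕ} (f : Matrix (Fin n) (Fin n) ℝ → ℝ)
    (g : Matrix (Fin n) (Fin n) ℝ → Matrix (Fin n) (Fin n) ℝ) : Prop :=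
  ∀ X, DifferentiableAt ℝ f X ∧ ∀ V, fderiv ℝ f X V = finner (g X) V

/-- `P` is the orthogonal projection matrix onto the column space of `U`:
the symmetric idempotent matrix with range equal to the column space of `U`. -/
def IsProjMatrix {n r : ℕ} (P : Matrix (Fin n) (Fin n) ℝ)
    (U : Matrix (Fin n) (Fin r) ℝ) : Prop :=
  Pᵀ = P ∧ P * P = P ∧ LinearMap.range P.mulVecLin = LinearMap.range U.mulVecLin

/-- `P` is the Euclidean (Frobenius) projection of `V` onto `C`. -/
def IsFrobProjection {n r : ℕ} (C : Set (Matrix (Fin n) (Fin r) ℝ))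
    (V P : Matrix (Fin n) (Fin r) ℝ) : Prop :=
  P ∈ C ∧ ∀ W ∈ C, fnorm (P - V) ≤ fnorm (W - V)

/-! `UUᵀ - VVᵀ = U(U - V)ᵀ + (U - V)Vᵀ`, and `‖AB‖_F ≤ ‖A‖₂‖B‖_F` because `A` moves each column of
`B` by at most its operator norm. The triangle inequality and `(a + b)² ≤ 2(a² + b²)` finish. -/

namespace Matrix

variable {𝕜 : Type*} [RCLike 𝕜] {l m n : Type*} [Fintype l] [Fintype m] [Fintype n]

theorem frobenius_norm_sq_eq_sum_row {α : Type*} [NormedAddCommGroup α] (A : Matrix m n α) :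
    ‖A‖ ^ 2 = ∑ i, ‖WithLp.toLp 2 (A i)‖ ^ 2 := by
  change ‖WithLp.toLp 2 fun i => WithLp.toLp 2 (A i)‖ ^ 2 = _
  exact PiLp.norm_sq_eq_of_L2 _ _

theorem norm_toLp_mulVec_le [DecidableEq m] (A : Matrix l m 𝕜) (v : m → 𝕜) :
    ‖WithLp.toLp 2 (A *ᵥ v)‖ ≤
      ‖(toEuclideanLin A).toContinuousLinearMap‖ * ‖WithLp.toLp 2 v‖ := by
  simpa [toLpLin_toLp] using (toEuclideanLin A).toContinuousLinearMap.le_opNorm (WithLp.toLp 2 v)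

theorem frobenius_norm_mul_le_opNorm_mul [DecidableEq m] (A : Matrix l m 𝕜) (B : Matrix m n 𝕜) :
    ‖A * B‖ ≤ ‖(toEuclideanLin A).toContinuousLinearMap‖ * ‖B‖ := by
  have hcol (j : n) : (Bᵀ * Aᵀ) j = A *ᵥ Bᵀ j := by
    ext i
    simp [mul_apply, mulVec, dotProduct, mul_comm]
  rw [← frobenius_norm_transpose (A * B), ← frobenius_norm_transpose B, transpose_mul,
    ← pow_le_pow_iff_left₀ (norm_nonneg _) (by positivity) two_ne_zero, mul_pow,
    frobenius_norm_sq_eq_sum_row, frobenius_norm_sq_eq_sum_row, Finset.mul_sum]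
  gcongr with j
  rw [← mul_pow, hcol]
  gcongr
  exact norm_toLp_mulVec_le A (Bᵀ j)

end Matrix

theorem fnorm_eq_norm {r s : ℕ} (A : Matrix (Fin r) (Fin s) ℝ) : fnorm A = ‖A‖ := by
  rw [fnorm, ← Real.sqrt_sq (norm_nonneg A), Matrix.frobenius_norm_sq_eq_sum_row]
  congr 1
  simp only [PiLp.norm_sq_eq_of_L2, Real.norm_eq_abs, sq_abs]
  simp only [finner, trace, diag, mul_apply, transpose_apply, sq]
  exact Finset.sum_comm

theorem fnorm_mul_le {r s t : ℕ} (A : Matrix (Fin r) (Fin s) ℝ) (B : Matrix (Fin s) (Fin t) ℝ) :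
    fnorm (A * B) ≤ specNorm A * fnorm B := by
  simpa only [fnorm_eq_norm, specNorm] using Matrix.frobenius_norm_mul_le_opNorm_mul A B

/-- For any `U, V ∈ ℝ^{n×r}`,
`‖UUᵀ − VVᵀ‖_F² ≤ 2·(‖U‖₂² + ‖V‖₂²)·‖U − V‖_F²`. -/
theorem fnorm_sq_outer_diff_le {n r : ℕ} (U V : Matrix (Fin n) (Fin r) ℝ) :
    fnorm (U * Uᵀ - V * Vᵀ) ^ 2 ≤
      2 * (specNorm U ^ 2 + specNorm V ^ 2) * fnorm (U - V) ^ 2 := by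
  have hsplit : U * Uᵀ - V * Vᵀ = U * (U - V)ᵀ + (V * (U - V)ᵀ)ᵀ := by
    simp only [transpose_mul, transpose_transpose, transpose_sub, Matrix.mul_sub]
    abel
  have hU := fnorm_mul_le U (U - V)ᵀ
  have hV := fnorm_mul_le V (U - V)ᵀ
  simp only [fnorm_eq_norm, frobenius_norm_transpose] at hU hV ⊢
  have htri : ‖U * Uᵀ - V * Vᵀ‖ ≤ (specNorm U + specNorm V) * ‖U - V‖ := by
    rw [hsplit]
    refine (norm_add_le _ _).trans ?_
    rw [frobenius_norm_transpose]
    linarith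
  calc ‖U * Uᵀ - V * Vᵀ‖ ^ 2 ≤ ((specNorm U + specNorm V) * ‖U - V‖) ^ 2 := by gcongr
    _ ≤ 2 * (specNorm U ^ 2 + specNorm V ^ 2) * ‖U - V‖ ^ 2 := by
      rw [mul_pow]
      gcongr
      nlinarith [sq_nonneg (specNorm U - specNorm V)]
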